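/- Values of K₁, K₂, and the Fisher information for the gamma–Poisson model at γ = 1, λ₀ = 1. In the gamma–Poisson model with shape γ = 1, let Y have the marginal distribution at λ₀ = 1, namely P(Y = y) = 2^{−(y+1)} for y ∈ ℕ (the marginal of Y | X ∼ Poisson(X), X ∼ Exponential(1)), and let μ₁(λ; y) = E_{X ∼ Gamma(1,λ)}[ log( e^{−X} X^{y} / y! ) ], whose derivative in λ is ∂μ₁/∂λ(λ; y) = 1/λ² − y/λ. Then: (a) K₁(λ₀) := Var_Y( ∂μ₁/∂λ(1; Y) ) = Var(Y) = 2; (b) K₂(λ₀) := −E_Y[ ∂²μ₁/∂λ²(1; Y) ] = 1; and (c) the Fisher information of the marginal family p_λ(y) = λ/(1+λ)^{y+1} at λ = 1 is I(1) = Var_Y( (d/dλ) log p_λ(Y)|_{λ=1} ) = 1/2. In particular K₁(λ₀), K₂(λ₀), and I(λ₀) are pairwise distinct. -/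

import Mathlib

/-!
Under the marginal law `P(Y = y) = 2^{-(y+1)}`, `Y` is geometric with ratio `1/2`, and every
quantity in the statement is the expectation of a quadratic polynomial in `Y`:
`∂μ₁/∂λ(1; y) = 1 - y`, `∂²μ₁/∂λ²(1; y) = y - 2`, and the score of `p_λ` at `λ = 1` is
`(1 - y)/2`. So everything reduces to the moments `E Y = 1` and `E Y² = 3`, which come from the
binomial series `∑ₙ C(n + k, k) rⁿ = (1 - r)^{-(k+1)}`.
-/

open Real

/-- The marginal pmf of `Y` in the gamma–Poisson model with `γ = 1`, `λ₀ = 1`: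
`P(Y = y) = 2^{−(y+1)}`. -/
noncomputable def pY (y : ℕ) : ℝ := (1 / 2 : ℝ) ^ (y + 1)

/-- `∂μ₁/∂λ(λ; y) = 1/λ² − y/λ`, the `λ`-derivative of the expected simulated
log-likelihood of a single observation in the gamma–Poisson model with `γ = 1`. -/
noncomputable def dEsll (lam : ℝ) (y : ℕ) : ℝ := 1 / lam ^ 2 - (y : ℝ) / lam

/-- The log marginal likelihood of the marginal family `p_λ(y) = λ/(1+λ)^{y+1}`. -/
noncomputable def logMarg (lam : ℝ) (y : ℕ) : ℝ := Real.log (lam / (1 + lam) ^ (y + 1))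

theorem hasSum_sq_mul_geometric_of_norm_lt_one {𝕜 : Type*} [NormedField 𝕜] [CompleteSpace 𝕜]
    {r : 𝕜} (hr : ‖r‖ < 1) :
    HasSum (fun n : ℕ ↦ (n : 𝕜) ^ 2 * r ^ n) (r * (1 + r) / (1 - r) ^ 3) := by
  have hr1 : 1 - r ≠ 0 := sub_ne_zero.2 (by rintro rfl; simp at hr)
  have hchoose (n : ℕ) : ((n + 2).choose 2 : 𝕜) * 2 = (n + 2) * (n + 1) := by
    have := congrArg (Nat.cast : ℕ → 𝕜) (Nat.add_one_mul_choose_eq (n + 1) 1)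
    push_cast [Nat.choose_one_right] at this
    linear_combination -this
  -- `n² = 2 * C(n + 2, 2) - 3 * C(n + 1, 1) + 1`
  have h := (((hasSum_choose_mul_geometric_of_norm_lt_one 2 hr).mul_left 2).sub
    ((hasSum_choose_mul_geometric_of_norm_lt_one 1 hr).mul_left 3)).add
      (hasSum_geometric_of_norm_lt_one hr)
  convert! h using 1
  · funext n
    push_cast [Nat.choose_one_right]
    linear_combination (-r ^ n) * hchoose n
  · field_simp
    ring

theorem hasSum_geometric_mul_quadratic {𝕜 : Type*} [NormedField 𝕜] [CompleteSpace 𝕜]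
    {r : 𝕜} (hr : ‖r‖ < 1) (a b c : 𝕜) :
    HasSum (fun n : ℕ ↦ (1 - r) * r ^ n * (a * n ^ 2 + b * n + c))
      (a * (r * (1 + r) / (1 - r) ^ 2) + b * (r / (1 - r)) + c) := by
  have hr1 : 1 - r ≠ 0 := sub_ne_zero.2 (by rintro rfl; simp at hr)
  have h := ((((hasSum_sq_mul_geometric_of_norm_lt_one hr).mul_left a).add
    ((hasSum_coe_mul_geometric_of_norm_lt_one hr).mul_left b)).add
      ((hasSum_geometric_of_norm_lt_one hr).mul_left c)).mul_left (1 - r)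
  convert! h using 1
  · funext n
    ring
  · field_simp

theorem tsum_pY_mul_eq_of_quadratic {f : ℕ → ℝ} (a b c : ℝ)
    (hf : ∀ n, f n = a * n ^ 2 + b * n + c) :
    ∑' n, pY n * f n = 3 * a + b + c := by
  have hr : ‖(1 / 2 : ℝ)‖ < 1 := by norm_num
  have hpY (n : ℕ) : pY n = (1 - 1 / 2) * (1 / 2) ^ n := by rw [pY, pow_succ]; ring
  simp_rw [hpY, hf]
  rw [(hasSum_geometric_mul_quadratic hr a b c).tsum_eq]
  norm_num
  ring

theorem hasDerivAt_dEsll (y : ℕ) {lam : ℝ} (hlam : lam ≠ 0) :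
    HasDerivAt (fun lam ↦ dEsll lam y) (y / lam ^ 2 - 2 / lam ^ 3) lam := by
  have h := ((hasDerivAt_const lam (1 : ℝ)).fun_div (hasDerivAt_pow 2 lam)
    (pow_ne_zero 2 hlam)).fun_sub ((hasDerivAt_const lam (y : ℝ)).fun_div (hasDerivAt_id' lam) hlam)
  convert! h using 1
  field_simp
  ring

theorem logMarg_eq_log_sub {lam : ℝ} (hlam : 0 < lam) (y : ℕ) :
    logMarg lam y = log lam - (y + 1) * log (1 + lam) := by
  rw [logMarg, log_div hlam.ne' (by positivity), log_pow]
  push_cast; ring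

theorem hasDerivAt_logMarg (y : ℕ) {lam : ℝ} (hlam : 0 < lam) :
    HasDerivAt (fun lam ↦ logMarg lam y) (1 / lam - (y + 1) / (1 + lam)) lam := by
  have h := (hasDerivAt_log hlam.ne').sub
    (((hasDerivAt_id lam).const_add 1).log (by positivity) |>.const_mul ((y : ℝ) + 1))
  have heq : (fun lam ↦ logMarg lam y) =ᶠ[nhds lam]
      fun lam ↦ log lam - (y + 1) * log (1 + lam) :=
    (eventually_gt_nhds hlam).mono fun _ h ↦ logMarg_eq_log_sub h y
  convert! h.congr_of_eventuallyEq heq using 1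
  simp only [id]
  ring

/-- **Values of `K₁`, `K₂`, and the Fisher information for the gamma–Poisson model at
`γ = 1`, `λ₀ = 1`.**  (a) `K₁(λ₀) = Var_Y(∂μ₁/∂λ(1; Y)) = Var(Y) = 2`;
(b) `K₂(λ₀) = −E_Y[∂²μ₁/∂λ²(1; Y)] = 1`;
(c) the Fisher information `I(1) = Var_Y((d/dλ) log p_λ(Y)|_{λ=1}) = 1/2`.
In particular `K₁(λ₀)`, `K₂(λ₀)` and `I(λ₀)` are pairwise distinct. -/
theorem gamma_poisson_K1_K2_fisher :
    -- (a)  K₁(1) = Var_Y(∂μ₁/∂λ(1; Y)) = Var(Y) = 2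
    (∑' y : ℕ, pY y * (dEsll 1 y - ∑' z : ℕ, pY z * dEsll 1 z) ^ 2
        = ∑' y : ℕ, pY y * ((y : ℝ) - ∑' z : ℕ, pY z * (z : ℝ)) ^ 2) ∧
    (∑' y : ℕ, pY y * (dEsll 1 y - ∑' z : ℕ, pY z * dEsll 1 z) ^ 2 = 2) ∧
    -- (b)  K₂(1) = −E_Y[∂²μ₁/∂λ²(1; Y)] = 1
    (-(∑' y : ℕ, pY y * deriv (fun lam : ℝ => dEsll lam y) 1) = 1) ∧
    -- (c)  Fisher information of the marginal family at λ = 1 equals 1/2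
    (∑' y : ℕ, pY y *
        (deriv (fun lam : ℝ => logMarg lam y) 1
          - ∑' z : ℕ, pY z * deriv (fun lam : ℝ => logMarg lam z) 1) ^ 2 = 1 / 2) ∧
    -- pairwise distinct
    ((2 : ℝ) ≠ 1 ∧ (2 : ℝ) ≠ 1 / 2 ∧ (1 : ℝ) ≠ 1 / 2) := by
  have hD (y : ℕ) : dEsll 1 y = 1 - y := by simp [dEsll]
  have hD' (y : ℕ) : deriv (fun lam ↦ dEsll lam y) 1 = y - 2 := by
    rw [(hasDerivAt_dEsll y one_ne_zero).deriv]; norm_num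
  have hL (y : ℕ) : deriv (fun lam ↦ logMarg lam y) 1 = (1 - y) / 2 := by
    rw [(hasDerivAt_logMarg y one_pos).deriv]; ring
  have meanD : ∑' z : ℕ, pY z * dEsll 1 z = 0 := by
    rw [tsum_pY_mul_eq_of_quadratic 0 (-1) 1 fun n ↦ by rw [hD]; ring]; norm_num
  have meanY : ∑' z : ℕ, pY z * (z : ℝ) = 1 := by
    rw [tsum_pY_mul_eq_of_quadratic 0 1 0 fun n ↦ by ring]; norm_num
  have meanL : ∑' z : ℕ, pY z * deriv (fun lam ↦ logMarg lam z) 1 = 0 := by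
    rw [tsum_pY_mul_eq_of_quadratic 0 (-1 / 2) (1 / 2) fun n ↦ by rw [hL]; ring]; norm_num
  have K₁ : ∑' y : ℕ, pY y * (dEsll 1 y - ∑' z : ℕ, pY z * dEsll 1 z) ^ 2 = 2 := by
    rw [meanD, tsum_pY_mul_eq_of_quadratic 1 (-2) 1 fun n ↦ by rw [hD]; ring]; norm_num
  have varY : ∑' y : ℕ, pY y * ((y : ℝ) - ∑' z : ℕ, pY z * (z : ℝ)) ^ 2 = 2 := by
    rw [meanY, tsum_pY_mul_eq_of_quadratic 1 (-2) 1 fun n ↦ by ring]; norm_num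
  refine ⟨K₁.trans varY.symm, K₁, ?_, ?_, by norm_num, by norm_num, by norm_num⟩
  · rw [tsum_pY_mul_eq_of_quadratic 0 1 (-2) fun n ↦ by rw [hD']; ring]; norm_num
  · rw [meanL, tsum_pY_mul_eq_of_quadratic (1 / 4) (-1 / 2) (1 / 4) fun n ↦ by rw [hL]; ring]
    norm_num
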